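/- arXiv:1107.1210 — 2 statements merged into one kernel-verified Lean document; each statement's English description precedes it below -/
import Mathlib

section
/- Let R be a commutative ring containing invertible elements A, B, a with A - B invertible, and let S be an associative unital R-algebra containing elements t and c satisfying t² = α·t, c·t = t·c = β·t, and c² = (1 - A·B)·1 + γ·t - (A+B)·c, where α = (a-a⁻¹)/(A-B) + 1, β = (A·a⁻¹ - B·a)/(A-B) - A - B, γ = (B²·a - A²·a⁻¹)/(A-B) + A·B. Then (A·1 + B·t + c)·(A·t + B·1 + c) = 1 and (A·t + B·1 + c)·(A·1 + B·t + c) = 1; in particular A·1 + B·t + c is a unit of S. -/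
/-! Expanding either product with the relations leaves `1 + κ • t` with
`κ = A² + B² + A B α + (A + B) β + γ`, and for the given `α`, `β`, `γ` the coefficient `κ` is
identically zero: its `(A - B)⁻¹`-part cancels termwise and the rest is
`A² + B² + 2AB - (A + B)²`. -/

section

variable {R S : Type*} [CommRing R] [Ring S] [Algebra R S] {A B α β γ : R} {t c : S}

theorem kauffman_mul_eq_one_add_smul (ht : t ^ 2 = α • t) (hct : c * t = β • t)
    (htc : t * c = β • t) (hc : c ^ 2 = (1 - A * B) • (1 : S) + γ • t - (A + B) • c) :
    (A • (1 : S) + B • t + c) * (A • t + B • (1 : S) + c) =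
      1 + (A ^ 2 + B ^ 2 + A * B * α + (A + B) * β + γ) • t := by
  rw [sq] at ht hc
  simp only [mul_add, add_mul, smul_mul_assoc, mul_smul_comm, mul_one, one_mul, ht, hct, htc, hc]
  module

theorem kauffman_mul_eq_one_add_smul' (ht : t ^ 2 = α • t) (hct : c * t = β • t)
    (htc : t * c = β • t) (hc : c ^ 2 = (1 - A * B) • (1 : S) + γ • t - (A + B) • c) :
    (A • t + B • (1 : S) + c) * (A • (1 : S) + B • t + c) =
      1 + (A ^ 2 + B ^ 2 + A * B * α + (A + B) * β + γ) • t := by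
  rw [sq] at ht hc
  simp only [mul_add, add_mul, smul_mul_assoc, mul_smul_comm, mul_one, one_mul, ht, hct, htc, hc]
  module

end

theorem kauffman_braid_generator_inverse_general {R : Type*} [CommRing R] {S : Type*} [Ring S]
    [Algebra R S] (A B a : R) [Invertible a]
    [Invertible (A - B)] (t c : S)
    (ht : t ^ 2 = ((a - ⅟a) * ⅟(A - B) + 1) • t)
    (hct : c * t = ((A * ⅟a - B * a) * ⅟(A - B) - A - B) • t)
    (htc : t * c = ((A * ⅟a - B * a) * ⅟(A - B) - A - B) • t)
    (hc : c ^ 2 = (1 - A * B) • (1 : S)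
      + ((B ^ 2 * a - A ^ 2 * ⅟a) * ⅟(A - B) + A * B) • t - (A + B) • c) :
    (A • (1 : S) + B • t + c) * (A • t + B • (1 : S) + c) = 1 ∧
    (A • t + B • (1 : S) + c) * (A • (1 : S) + B • t + c) = 1 ∧
    IsUnit (A • (1 : S) + B • t + c) := by
  have hκ : A ^ 2 + B ^ 2 + A * B * ((a - ⅟a) * ⅟(A - B) + 1)
      + (A + B) * ((A * ⅟a - B * a) * ⅟(A - B) - A - B)
      + ((B ^ 2 * a - A ^ 2 * ⅟a) * ⅟(A - B) + A * B) = 0 := by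
    ring
  have h₁ := kauffman_mul_eq_one_add_smul ht hct htc hc
  have h₂ := kauffman_mul_eq_one_add_smul' ht hct htc hc
  rw [hκ, zero_smul, add_zero] at h₁ h₂
  exact ⟨h₁, h₂, ⟨⟨_, _, h₁, h₂⟩, rfl⟩⟩

/-- In an algebra S over a commutative ring R with invertible A, B, a and A - B,
if t, c satisfy the BMW-type relations (4a)-(4c), then A•1 + B•t + c and
A•t + B•1 + c are mutually inverse; in particular A•1 + B•t + c is a unit. -/
theorem kauffman_braid_generator_inverse {R : Type*} [CommRing R] {S : Type*} [Ring S]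
    [Algebra R S] (A B a : R) [Invertible A] [Invertible B] [Invertible a]
    [Invertible (A - B)] (t c : S)
    (ht : t ^ 2 = ((a - ⅟a) * ⅟(A - B) + 1) • t)
    (hct : c * t = ((A * ⅟a - B * a) * ⅟(A - B) - A - B) • t)
    (htc : t * c = ((A * ⅟a - B * a) * ⅟(A - B) - A - B) • t)
    (hc : c ^ 2 = (1 - A * B) • (1 : S)
      + ((B ^ 2 * a - A ^ 2 * ⅟a) * ⅟(A - B) + A * B) • t - (A + B) • c) :
    (A • (1 : S) + B • t + c) * (A • t + B • (1 : S) + c) = 1 ∧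
    (A • t + B • (1 : S) + c) * (A • (1 : S) + B • t + c) = 1 ∧
    IsUnit (A • (1 : S) + B • t + c) :=
  kauffman_braid_generator_inverse_general A B a t c ht hct htc hc
end

section
/- Let R be a commutative ring containing invertible elements A, B, a with A - B invertible, and set α, β, γ, δ as in the Kauffman skein coefficients. Let S be an associative unital R-algebra with elements t₁, t₂, c₁, c₂ satisfying: t₁t₂t₁ = t₁, t₂t₁t₂ = t₂, c₁t₂ = c₂t₁t₂, t₁c₂ = t₁t₂c₁, c₂c₁c₂ - c₁c₂c₁ = A·B·(c₂ - c₁ + t₂c₁ - t₁c₂ + c₁t₂ - c₂t₁) + δ·(t₁ - t₂), and for i = 1,2: tᵢ² = α·tᵢ, cᵢtᵢ = tᵢcᵢ = β·tᵢ, cᵢ² = (1 - A·B)·1 + γ·tᵢ - (A+B)·cᵢ. Then, writing gᵢ = A·1 + B·tᵢ + cᵢ, one has g₁g₂g₁ = g₂g₁g₂. -/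
/-!
Expanding g₁g₂g₁ and g₂g₁g₂ and reducing every word in t₁, t₂, c₁, c₂ of length at most three
with the defining relations leaves, besides identical terms, only the cubic words c₁c₂c₁ and
c₂c₁c₂; their difference is prescribed by the mixed cubic relation. What remains is a single
identity between the coefficients, δ = AB²α + (A + 2B)γ + B(2A + B)β + B(A² + B²), which holds
for Kauffman's α, β, γ, δ as a polynomial identity in a, a⁻¹ and (A - B)⁻¹.
-/

section

variable {R S : Type*} [CommRing R] [Ring S] [Algebra R S]

structure KauffmanRelations (A B α β γ δ : R) (t₁ t₂ c₁ c₂ : S) : Prop where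
  t₁_mul_t₂_mul_t₁ : t₁ * t₂ * t₁ = t₁
  t₂_mul_t₁_mul_t₂ : t₂ * t₁ * t₂ = t₂
  c₁_mul_t₂ : c₁ * t₂ = c₂ * t₁ * t₂
  t₁_mul_c₂ : t₁ * c₂ = t₁ * t₂ * c₁
  c₂_mul_c₁_mul_c₂_sub : c₂ * c₁ * c₂ - c₁ * c₂ * c₁
    = (A * B) • (c₂ - c₁ + t₂ * c₁ - t₁ * c₂ + c₁ * t₂ - c₂ * t₁) + δ • (t₁ - t₂)
  t₁_mul_self : t₁ * t₁ = α • t₁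
  t₂_mul_self : t₂ * t₂ = α • t₂
  c₁_mul_t₁ : c₁ * t₁ = β • t₁
  t₁_mul_c₁ : t₁ * c₁ = β • t₁
  c₂_mul_t₂ : c₂ * t₂ = β • t₂
  t₂_mul_c₂ : t₂ * c₂ = β • t₂
  c₁_mul_self : c₁ * c₁ = (1 - A * B) • (1 : S) + γ • t₁ - (A + B) • c₁
  c₂_mul_self : c₂ * c₂ = (1 - A * B) • (1 : S) + γ • t₂ - (A + B) • c₂

namespace KauffmanRelations

variable {A B α β γ δ : R} {t₁ t₂ c₁ c₂ : S} (h : KauffmanRelations A B α β γ δ t₁ t₂ c₁ c₂)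
include h

theorem c₁_mul_t₂_mul_t₁ : c₁ * t₂ * t₁ = c₂ * t₁ := by
  rw [h.c₁_mul_t₂, mul_assoc c₂, mul_assoc c₂, h.t₁_mul_t₂_mul_t₁]

theorem t₂_mul_t₁_mul_c₂ : t₂ * t₁ * c₂ = t₂ * c₁ := by
  rw [mul_assoc, h.t₁_mul_c₂, ← mul_assoc, ← mul_assoc, h.t₂_mul_t₁_mul_t₂]

theorem swap : KauffmanRelations A B α β γ δ t₂ t₁ c₂ c₁ where
  t₁_mul_t₂_mul_t₁ := h.t₂_mul_t₁_mul_t₂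
  t₂_mul_t₁_mul_t₂ := h.t₁_mul_t₂_mul_t₁
  c₁_mul_t₂ := h.c₁_mul_t₂_mul_t₁.symm
  t₁_mul_c₂ := h.t₂_mul_t₁_mul_c₂.symm
  c₂_mul_c₁_mul_c₂_sub := by rw [← neg_sub, h.c₂_mul_c₁_mul_c₂_sub]; module
  t₁_mul_self := h.t₂_mul_self
  t₂_mul_self := h.t₁_mul_self
  c₁_mul_t₁ := h.c₂_mul_t₂
  t₁_mul_c₁ := h.t₂_mul_c₂
  c₂_mul_t₂ := h.c₁_mul_t₁
  t₂_mul_c₂ := h.t₁_mul_c₁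
  c₁_mul_self := h.c₂_mul_self
  c₂_mul_self := h.c₁_mul_self

theorem c₁_mul_t₂_mul_c₁ : c₁ * t₂ * c₁ = c₂ * t₁ * c₂ := by
  rw [h.c₁_mul_t₂, mul_assoc c₂, mul_assoc c₂, ← h.t₁_mul_c₂, ← mul_assoc]

theorem t₁_mul_c₂_mul_t₁ : t₁ * c₂ * t₁ = β • t₁ := by
  rw [h.t₁_mul_c₂, mul_assoc (t₁ * t₂), h.c₁_mul_t₁, mul_smul_comm, h.t₁_mul_t₂_mul_t₁]

theorem t₁_mul_c₂_mul_c₁ :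
    t₁ * c₂ * c₁ = (1 - A * B) • (t₁ * t₂) + γ • t₁ - (A + B) • (t₁ * c₂) := by
  rw [h.t₁_mul_c₂, mul_assoc (t₁ * t₂), h.c₁_mul_self]
  simp only [mul_add, mul_sub, mul_smul_comm, mul_one]
  rw [h.t₁_mul_t₂_mul_t₁, ← h.t₁_mul_c₂]

theorem c₂_mul_c₁_mul_t₂ :
    c₂ * c₁ * t₂ = (1 - A * B) • (t₁ * t₂) + γ • t₂ - (A + B) • (c₁ * t₂) := by
  have hc₂c₂ : c₂ * c₁ * t₂ = c₂ * c₂ * (t₁ * t₂) := by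
    rw [mul_assoc, h.c₁_mul_t₂]; simp only [mul_assoc]
  rw [hc₂c₂, h.c₂_mul_self]
  simp only [add_mul, sub_mul, smul_mul_assoc, one_mul, ← mul_assoc]
  rw [h.t₂_mul_t₁_mul_t₂, ← h.c₁_mul_t₂]

theorem braid
    (hδ : δ = A * B ^ 2 * α + (A + 2 * B) * γ + B * (2 * A + B) * β + B * (A ^ 2 + B ^ 2)) :
    (A • (1 : S) + B • t₁ + c₁) * (A • (1 : S) + B • t₂ + c₂) * (A • (1 : S) + B • t₁ + c₁)
      = (A • (1 : S) + B • t₂ + c₂) * (A • (1 : S) + B • t₁ + c₁)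
        * (A • (1 : S) + B • t₂ + c₂) := by
  have hc₂c₁c₂ := sub_eq_iff_eq_add.mp h.c₂_mul_c₁_mul_c₂_sub
  simp only [mul_add, add_mul, smul_mul_assoc, mul_smul_comm, mul_one, one_mul, smul_smul,
    smul_add, smul_sub, h.t₁_mul_t₂_mul_t₁, h.t₂_mul_t₁_mul_t₂, h.t₁_mul_self, h.t₂_mul_self,
    h.c₁_mul_t₁, h.t₁_mul_c₁, h.c₂_mul_t₂, h.t₂_mul_c₂, h.c₁_mul_self, h.c₂_mul_self,
    h.c₁_mul_t₂_mul_t₁, h.t₂_mul_t₁_mul_c₂, h.c₁_mul_t₂_mul_c₁, h.t₁_mul_c₂_mul_t₁,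
    h.swap.t₁_mul_c₂_mul_t₁, h.t₁_mul_c₂_mul_c₁, h.swap.t₁_mul_c₂_mul_c₁, h.c₂_mul_c₁_mul_t₂,
    h.swap.c₂_mul_c₁_mul_t₂, hc₂c₁c₂, ← h.c₁_mul_t₂, ← h.t₁_mul_c₂]
  subst hδ
  match_scalars <;> ring

end KauffmanRelations

end

theorem kauffman_braid_relation_general {R : Type*} [CommRing R] {S : Type*} [Ring S]
    [Algebra R S] (A B a : R) [Invertible a]
    [Invertible (A - B)] (t₁ t₂ c₁ c₂ : S)
    (ht121 : t₁ * t₂ * t₁ = t₁) (ht212 : t₂ * t₁ * t₂ = t₂)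
    (h3a : c₁ * t₂ = c₂ * t₁ * t₂) (h3b : t₁ * c₂ = t₁ * t₂ * c₁)
    (h3c : c₂ * c₁ * c₂ - c₁ * c₂ * c₁
      = (A * B) • (c₂ - c₁ + t₂ * c₁ - t₁ * c₂ + c₁ * t₂ - c₂ * t₁)
        + ((B ^ 3 * a - A ^ 3 * ⅟a) * ⅟(A - B)) • (t₁ - t₂))
    (ht1 : t₁ ^ 2 = ((a - ⅟a) * ⅟(A - B) + 1) • t₁)
    (ht2 : t₂ ^ 2 = ((a - ⅟a) * ⅟(A - B) + 1) • t₂)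
    (hc1t1 : c₁ * t₁ = ((A * ⅟a - B * a) * ⅟(A - B) - A - B) • t₁)
    (ht1c1 : t₁ * c₁ = ((A * ⅟a - B * a) * ⅟(A - B) - A - B) • t₁)
    (hc2t2 : c₂ * t₂ = ((A * ⅟a - B * a) * ⅟(A - B) - A - B) • t₂)
    (ht2c2 : t₂ * c₂ = ((A * ⅟a - B * a) * ⅟(A - B) - A - B) • t₂)
    (hc1 : c₁ ^ 2 = (1 - A * B) • (1 : S)
      + ((B ^ 2 * a - A ^ 2 * ⅟a) * ⅟(A - B) + A * B) • t₁ - (A + B) • c₁)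
    (hc2 : c₂ ^ 2 = (1 - A * B) • (1 : S)
      + ((B ^ 2 * a - A ^ 2 * ⅟a) * ⅟(A - B) + A * B) • t₂ - (A + B) • c₂) :
    ((A • (1 : S) + B • t₁ + c₁) * (A • (1 : S) + B • t₂ + c₂) * (A • (1 : S) + B • t₁ + c₁)
      = (A • (1 : S) + B • t₂ + c₂) * (A • (1 : S) + B • t₁ + c₁)
        * (A • (1 : S) + B • t₂ + c₂)) := by
  rw [sq] at ht1 ht2 hc1 hc2
  have h : KauffmanRelations A B _ _ _ _ t₁ t₂ c₁ c₂ :=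
    ⟨ht121, ht212, h3a, h3b, h3c, ht1, ht2, hc1t1, ht1c1, hc2t2, ht2c2, hc1, hc2⟩
  exact h.braid (by ring)

/-- The braid relation g₁g₂g₁ = g₂g₁g₂ for gᵢ = A•1 + B•tᵢ + cᵢ, where t₁, t₂, c₁, c₂
satisfy the defining relations of the algebra 𝒜ₙ (isomorphic to the BMW algebra). -/
theorem kauffman_braid_relation {R : Type*} [CommRing R] {S : Type*} [Ring S]
    [Algebra R S] (A B a : R) [Invertible A] [Invertible B] [Invertible a]
    [Invertible (A - B)] (t₁ t₂ c₁ c₂ : S)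
    (ht121 : t₁ * t₂ * t₁ = t₁) (ht212 : t₂ * t₁ * t₂ = t₂)
    (h3a : c₁ * t₂ = c₂ * t₁ * t₂) (h3b : t₁ * c₂ = t₁ * t₂ * c₁)
    (h3c : c₂ * c₁ * c₂ - c₁ * c₂ * c₁
      = (A * B) • (c₂ - c₁ + t₂ * c₁ - t₁ * c₂ + c₁ * t₂ - c₂ * t₁)
        + ((B ^ 3 * a - A ^ 3 * ⅟a) * ⅟(A - B)) • (t₁ - t₂))
    (ht1 : t₁ ^ 2 = ((a - ⅟a) * ⅟(A - B) + 1) • t₁)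
    (ht2 : t₂ ^ 2 = ((a - ⅟a) * ⅟(A - B) + 1) • t₂)
    (hc1t1 : c₁ * t₁ = ((A * ⅟a - B * a) * ⅟(A - B) - A - B) • t₁)
    (ht1c1 : t₁ * c₁ = ((A * ⅟a - B * a) * ⅟(A - B) - A - B) • t₁)
    (hc2t2 : c₂ * t₂ = ((A * ⅟a - B * a) * ⅟(A - B) - A - B) • t₂)
    (ht2c2 : t₂ * c₂ = ((A * ⅟a - B * a) * ⅟(A - B) - A - B) • t₂)
    (hc1 : c₁ ^ 2 = (1 - A * B) • (1 : S)
      + ((B ^ 2 * a - A ^ 2 * ⅟a) * ⅟(A - B) + A * B) • t₁ - (A + B) • c₁)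
    (hc2 : c₂ ^ 2 = (1 - A * B) • (1 : S)
      + ((B ^ 2 * a - A ^ 2 * ⅟a) * ⅟(A - B) + A * B) • t₂ - (A + B) • c₂) :
    ((A • (1 : S) + B • t₁ + c₁) * (A • (1 : S) + B • t₂ + c₂) * (A • (1 : S) + B • t₁ + c₁)
      = (A • (1 : S) + B • t₂ + c₂) * (A • (1 : S) + B • t₁ + c₁)
        * (A • (1 : S) + B • t₂ + c₂)) :=
  kauffman_braid_relation_general A B a t₁ t₂ c₁ c₂ ht121 ht212 h3a h3b h3c ht1 ht2 hc1t1 ht1c1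
    hc2t2 ht2c2 hc1 hc2
end
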